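/- Let P(λ) = λ(J₁+R₁) + (J₂+R₂) be an n×n complex posH pencil. If ker R₁ ∩ ker R₂ = {0}, then the numerical range of P(λ) contains no positive real number: for every real α > 0 and every nonzero x ∈ ℂⁿ one has x*(α(J₁+R₁) + (J₂+R₂))x ≠ 0. -/

import Mathlib

open Matrix
open scoped ComplexOrder

/-!
The real part of `x* (α(J₁+R₁) + (J₂+R₂)) x` is `α x*R₁x + x*R₂x`, since skew-Hermitian
quadratic forms are purely imaginary. For `α > 0` both terms are nonnegative, so if the form
vanishes then `x*R₁x = x*R₂x = 0`; for a positive semidefinite `R` this forces `R x = 0`, and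
`ker R₁ ∩ ker R₂ = {0}` gives `x = 0`.
-/

namespace Matrix

variable {ι 𝕜 : Type*} [Fintype ι] [RCLike 𝕜]

lemma re_dotProduct_mulVec_eq_zero_of_conjTranspose_eq_neg {J : Matrix ι ι 𝕜} (hJ : Jᴴ = -J)
    (x : ι → 𝕜) : RCLike.re (star x ⬝ᵥ J *ᵥ x) = 0 := by
  have hconj : star (star x ⬝ᵥ J *ᵥ x) = -(star x ⬝ᵥ J *ᵥ x) := by
    rw [← star_dotProduct, star_mulVec, hJ, vecMul_neg, neg_dotProduct, dotProduct_mulVec]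
  have := congrArg RCLike.re hconj
  rw [RCLike.star_def, RCLike.conj_re, map_neg] at this
  linarith

lemma PosSemidef.mulVec_eq_zero_of_re_dotProduct_mulVec_eq_zero {R : Matrix ι ι 𝕜}
    (hR : R.PosSemidef) {x : ι → 𝕜} (h : RCLike.re (star x ⬝ᵥ R *ᵥ x) = 0) : R *ᵥ x = 0 := by
  refine (hR.dotProduct_mulVec_zero_iff x).mp (RCLike.ext ?_ ?_)
  · simpa using h
  · simpa using (RCLike.nonneg_iff.mp (hR.dotProduct_mulVec_nonneg x)).2

lemma re_dotProduct_mulVec_smul_add_of_conjTranspose_eq_neg {J₁ J₂ : Matrix ι ι 𝕜}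
    (R₁ R₂ : Matrix ι ι 𝕜) (hJ₁ : J₁ᴴ = -J₁) (hJ₂ : J₂ᴴ = -J₂) (α : ℝ) (x : ι → 𝕜) :
    RCLike.re (star x ⬝ᵥ ((α : 𝕜) • (J₁ + R₁) + (J₂ + R₂)) *ᵥ x) =
      α * RCLike.re (star x ⬝ᵥ R₁ *ᵥ x) + RCLike.re (star x ⬝ᵥ R₂ *ᵥ x) := by
  simp only [← RCLike.real_smul_eq_coe_smul, add_mulVec, smul_mulVec, dotProduct_add,
    dotProduct_smul, map_add, RCLike.smul_re,
    re_dotProduct_mulVec_eq_zero_of_conjTranspose_eq_neg hJ₁,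
    re_dotProduct_mulVec_eq_zero_of_conjTranspose_eq_neg hJ₂]
  ring

end Matrix

/-- Theorem 4.5, (a) ⇒ (b): for a posH pencil `P(λ) = λ(J₁+R₁) + (J₂+R₂)`, if
`ker R₁ ∩ ker R₂ = {0}`, then the numerical range of `P(λ)` contains no positive
real number. -/
theorem posH_numrange_avoids_positive_reals {n : ℕ}
    (J₁ J₂ R₁ R₂ : Matrix (Fin n) (Fin n) ℂ)
    (hJ₁ : J₁ᴴ = -J₁) (hJ₂ : J₂ᴴ = -J₂)
    (hR₁ : R₁.PosSemidef) (hR₂ : R₂.PosSemidef)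
    (hker : ∀ x : Fin n → ℂ, R₁ *ᵥ x = 0 → R₂ *ᵥ x = 0 → x = 0) :
    ∀ (α : ℝ) (x : Fin n → ℂ), 0 < α → x ≠ 0 →
      star x ⬝ᵥ (((α : ℂ) • (J₁ + R₁) + (J₂ + R₂)) *ᵥ x) ≠ 0 := by
  intro α x hα hx hzero
  have hre := re_dotProduct_mulVec_smul_add_of_conjTranspose_eq_neg R₁ R₂ hJ₁ hJ₂ α x
  rw [RCLike.ofReal_eq_complex_ofReal, hzero, map_zero] at hre
  have h₁ := hR₁.re_dotProduct_nonneg x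
  have h₂ := hR₂.re_dotProduct_nonneg x
  exact hx <| hker x (hR₁.mulVec_eq_zero_of_re_dotProduct_mulVec_eq_zero (by nlinarith))
    (hR₂.mulVec_eq_zero_of_re_dotProduct_mulVec_eq_zero (by nlinarith))
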